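/- arXiv:2510.26127 — 4 statements merged into one kernel-verified Lean document; each statement's English description precedes it below -/
import Mathlib

section
/- Let q be a prime and let a, b, c be nonzero elements of ℚ_q. Then (a, b·c) is q-solvable if and only if ((a, b) is q-solvable ↔ (a, c) is q-solvable). (This expresses the multiplicativity of the Hilbert symbol: (a,b)_q (a,c)_q = (a,bc)_q.) -/
/-- For a prime `q` and `a b : ℚ_[q]`, the pair `(a, b)` is `q`-solvable if
`a·x² + b·y² = z²` has a solution in `ℚ_[q]` with `(x, y, z) ≠ (0, 0, 0)`. -/
def QSolvable {q : ℕ} [Fact q.Prime] (a b : ℚ_[q]) : Prop :=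
  ∃ x y z : ℚ_[q], ¬(x = 0 ∧ y = 0 ∧ z = 0) ∧ a * x ^ 2 + b * y ^ 2 = z ^ 2

/-!
For `a ≠ 0`, the pair `(a, b)` is solvable iff `b` is a value of the norm form `z² - a x²`, and
the nonzero values of this form are a subgroup `N_a` of `ℚ_qˣ` containing the squares.
Multiplicativity in `b` says exactly that `N_a` has index at most two, and this is checked on
square classes.

For odd `q`, Hensel's lemma reduces squares among units to squares in `𝔽_q`. If `a` is a unit,
every unit is a norm (the conic `z² = a x² + u` has a point over `𝔽_q` that lifts), so `N_a`
contains all classes of even valuation. If `a = q u`, then `N_a` contains `-a` and the units with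
square residue, again half of the four classes.

For `q = 2`, the classes of `-1`, `5`, `2` form an `𝔽₂`-basis of `ℚ₂ˣ / ℚ₂ˣ²` (a unit is a
square as soon as it is `1` mod `8`). For each basis combination `a`, two explicit norms span the
kernel of the classical pairing `(a, ·)₂`, which is a hyperplane.
-/

section Field

variable {K : Type*} [Field K]

def IsNorm (a b : K) : Prop := ∃ x z : K, z ^ 2 - a * x ^ 2 = b

/-- The nonzero values of the norm form have index at most two in `Kˣ`: every nonzero `x` lies in
the subgroup or in its coset through `d`. -/
def NormIndexLeTwo (a : K) : Prop := ∃ d ≠ 0, ∀ x ≠ (0 : K), IsNorm a x ∨ IsNorm a (x * d)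

theorem IsSquare.isNorm {b : K} (hb : IsSquare b) (a : K) : IsNorm a b := by
  obtain ⟨s, rfl⟩ := hb
  exact ⟨0, s, by ring⟩

theorem isNorm_neg_self (a : K) : IsNorm a (-a) := ⟨1, 0, by ring⟩

theorem IsNorm.mul {a b c : K} (hb : IsNorm a b) (hc : IsNorm a c) : IsNorm a (b * c) := by
  obtain ⟨x₁, z₁, rfl⟩ := hb
  obtain ⟨x₂, z₂, rfl⟩ := hc
  exact ⟨z₁ * x₂ + x₁ * z₂, z₁ * z₂ + a * x₁ * x₂, by ring⟩

theorem IsNorm.inv {a b : K} (hb : IsNorm a b) : IsNorm a b⁻¹ := by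
  obtain ⟨x, z, rfl⟩ := hb
  refine ⟨x / (z ^ 2 - a * x ^ 2), z / (z ^ 2 - a * x ^ 2), ?_⟩
  rcases eq_or_ne (z ^ 2 - a * x ^ 2) 0 with h | h
  · simp [h]
  · field_simp

theorem IsNorm.of_mul {a b c : K} (hb₀ : b ≠ 0) (hb : IsNorm a b) (hbc : IsNorm a (b * c)) :
    IsNorm a c := by
  simpa [hb₀] using hb.inv.mul hbc

theorem IsNorm.of_isSquare_mul {a b c : K} (hb : IsNorm a b) (hb₀ : b ≠ 0)
    (h : IsSquare (b * c)) : IsNorm a c := by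
  simpa [hb₀] using hb.inv.mul (h.isNorm a)

theorem isNorm_sq_mul_iff {a b s : K} (hs : s ≠ 0) : IsNorm (s ^ 2 * a) b ↔ IsNorm a b := by
  constructor
  · rintro ⟨x, z, rfl⟩
    exact ⟨s * x, z, by ring⟩
  · rintro ⟨x, z, rfl⟩
    exact ⟨x / s, z, by field_simp⟩

theorem normIndexLeTwo_sq_mul_iff {a s : K} (hs : s ≠ 0) :
    NormIndexLeTwo (s ^ 2 * a) ↔ NormIndexLeTwo a := by
  simp only [NormIndexLeTwo, isNorm_sq_mul_iff hs]

theorem isNorm_of_isSquare [NeZero (2 : K)] {a : K} (ha : a ≠ 0) (h : IsSquare a) (b : K) :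
    IsNorm a b := by
  obtain ⟨s, rfl⟩ := h
  have hs : s ≠ 0 := by rintro rfl; simp at ha
  refine ⟨(b - 1) / (2 * s), (b + 1) / 2, ?_⟩
  field_simp
  ring

theorem isNorm_mul_iff_of_normIndexLeTwo {a b c : K} (ha : NormIndexLeTwo a) (hb : b ≠ 0)
    (hc : c ≠ 0) : IsNorm a (b * c) ↔ (IsNorm a b ↔ IsNorm a c) := by
  obtain ⟨d, hd, hcover⟩ := ha
  refine ⟨fun hbc => ⟨fun hb' => hb'.of_mul hb hbc, fun hc' => hc'.of_mul hc (mul_comm b c ▸ hbc)⟩,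
    fun h => ?_⟩
  by_cases hb' : IsNorm a b
  · exact hb'.mul (h.mp hb')
  have hbd := (hcover b hb).resolve_left hb'
  have hcd := (hcover c hc).resolve_left (mt h.mpr hb')
  exact (hbd.mul hcd).of_isSquare_mul (by simp [hb, hc, hd]) ⟨b * c * d, by ring⟩

end Field

theorem FiniteField.isSquare_mul_of_not_isSquare {F : Type*} [Field F] [Fintype F] {x y : F}
    (hx : ¬IsSquare x) (hy : ¬IsSquare y) : IsSquare (x * y) := by
  classical
  have hx₀ : x ≠ 0 := by rintro rfl; exact hx IsSquare.zero
  have hy₀ : y ≠ 0 := by rintro rfl; exact hy IsSquare.zero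
  rw [← quadraticChar_one_iff_isSquare (mul_ne_zero hx₀ hy₀), map_mul,
    quadraticChar_neg_one_iff_not_isSquare.mpr hx, quadraticChar_neg_one_iff_not_isSquare.mpr hy]
  norm_num

open Polynomial in
theorem FiniteField.exists_sq_eq_mul_sq_add {F : Type*} [Field F] [Fintype F]
    (hF : Fintype.card F % 2 = 1) {a : F} (ha : a ≠ 0) (b : F) :
    ∃ x z : F, z ^ 2 = a * x ^ 2 + b := by
  obtain ⟨x, z, h⟩ := exists_root_sum_quadratic (f := C a * X ^ 2 + C b) (g := -X ^ 2)
    (by compute_degree!) (by compute_degree!) hF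
  exact ⟨x, z, by simp at h; linear_combination -h⟩

theorem isSquare_pow_val_mul_pow_val_mul_pow_val_add {M : Type*} [Monoid M] (x : M)
    (i j : ZMod 2) : IsSquare (x ^ i.val * x ^ j.val * x ^ (i + j).val) := by
  rw [← pow_add, ← pow_add]
  exact (by revert i j; decide : Even (i.val + j.val + (i + j).val)).isSquare_pow x

namespace PadicInt

variable {p : ℕ} [Fact p.Prime]

theorem isSquare_coe {x : ℤ_[p]} (h : IsSquare x) : IsSquare (x : ℚ_[p]) := by
  obtain ⟨r, rfl⟩ := h
  exact ⟨r, coe_mul r r⟩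

open Polynomial in
theorem isSquare_of_norm_sub_sq_lt {u a : ℤ_[p]} (h : ‖u - a ^ 2‖ < ‖2 * a‖ ^ 2) :
    IsSquare u := by
  have hF : ‖(X ^ 2 - C u : Polynomial ℤ_[p]).aeval a‖ <
      ‖(derivative (X ^ 2 - C u : Polynomial ℤ_[p])).aeval a‖ ^ 2 := by
    simp only [map_sub, map_pow, aeval_X, aeval_C, derivative_X_pow, derivative_C, sub_zero,
      map_mul, map_natCast]
    simpa [norm_sub_rev] using h
  obtain ⟨z, hz, -⟩ := hensels_lemma hF
  exact ⟨z, by simpa [sub_eq_zero, sq, eq_comm] using hz⟩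

theorem norm_lt_one_iff_toZMod_eq_zero (x : ℤ_[p]) : ‖x‖ < 1 ↔ toZMod x = 0 := by
  rw [← RingHom.mem_ker, ker_toZMod, IsLocalRing.mem_maximalIdeal, mem_nonunits]

theorem norm_eq_one_iff_toZMod_ne_zero (x : ℤ_[p]) : ‖x‖ = 1 ↔ toZMod x ≠ 0 := by
  rw [ne_eq, ← norm_lt_one_iff_toZMod_eq_zero, not_lt, (norm_le_one x).ge_iff_eq, eq_comm]

theorem isSquare_of_isSquare_toZMod (hp : p ≠ 2) {x : ℤ_[p]} (hx₀ : toZMod x ≠ 0)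
    (hx : IsSquare (toZMod x)) : IsSquare x := by
  obtain ⟨w, hw⟩ := hx
  have hw₀ : w ≠ 0 := by rintro rfl; simp_all
  have hlift : toZMod (w.val : ℤ_[p]) = w := by simp
  have h2 : (2 : ZMod p) ≠ 0 := Ring.two_ne_zero (by rwa [ZMod.ringChar_zmod_n])
  refine isSquare_of_norm_sub_sq_lt (a := (w.val : ℤ_[p])) ?_
  rw [(norm_eq_one_iff_toZMod_ne_zero (2 * _)).mpr (by simp [map_ofNat, h2, hw₀]), one_pow,
    norm_lt_one_iff_toZMod_eq_zero, map_sub, map_pow, hlift, hw, sq, sub_self]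

theorem isSquare_of_toZModPow_three_eq_one {x : ℤ_[2]} (h : toZModPow 3 x = 1) :
    IsSquare x := by
  have hx : ‖x - 1‖ ≤ 2⁻¹ ^ 3 := by
    have := (norm_le_pow_iff_mem_span_pow (x - 1) 3).mpr
      (by rw [← ker_toZModPow, RingHom.mem_ker, map_sub, h, map_one, sub_self])
    simpa using this
  have h2 : ‖(2 : ℤ_[2])‖ = 2⁻¹ := by simpa using norm_p (p := 2)
  refine isSquare_of_norm_sub_sq_lt (a := 1) (lt_of_le_of_lt (by simpa using hx) ?_)
  rw [mul_one, h2]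
  norm_num

end PadicInt

theorem qsolvable_iff_isNorm {q : ℕ} [Fact q.Prime] {a b : ℚ_[q]} (ha : a ≠ 0) :
    QSolvable a b ↔ IsNorm a b := by
  constructor
  · rintro ⟨x, y, z, hne, h⟩
    by_cases hy : y = 0
    · subst hy
      have hx : x ≠ 0 := by
        rintro rfl
        exact hne ⟨rfl, rfl, by simpa using h.symm⟩
      refine isNorm_of_isSquare ha ⟨z / x, ?_⟩ b
      field_simp
      linear_combination h
    · exact ⟨x / y, z / y, by field_simp; linear_combination -h⟩
  · rintro ⟨x, z, h⟩
    exact ⟨x, 1, z, by simp, by linear_combination -h⟩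

namespace Padic

open PadicInt

section

variable {p : ℕ} [Fact p.Prime]

theorem exists_eq_sq_mul_unit {x : ℚ_[p]} (hx : x ≠ 0) :
    ∃ s ≠ 0, ∃ u : ℤ_[p]ˣ, x = s ^ 2 * u ∨ x = s ^ 2 * (p * u) := by
  have hp : (p : ℚ_[p]) ≠ 0 := Nat.cast_ne_zero.mpr (Fact.out : p.Prime).ne_zero
  have hnorm : ‖x * (p : ℚ_[p]) ^ (-x.valuation)‖ = 1 := by
    rw [norm_mul, norm_p_zpow, norm_eq_zpow_neg_valuation hx, neg_neg,
      ← zpow_add₀ (by simpa using hp)]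
    simp
  set u := mkUnits hnorm
  have hxu : x = (p : ℚ_[p]) ^ x.valuation * u := by
    rw [mkUnits_eq, mul_left_comm, ← zpow_add₀ hp, add_neg_cancel, zpow_zero, mul_one]
  obtain ⟨k, hk | hk⟩ := Int.even_or_odd' x.valuation
  · refine ⟨(p : ℚ_[p]) ^ k, zpow_ne_zero k hp, u, .inl ?_⟩
    rw [hxu, hk, mul_comm 2 k, zpow_mul, zpow_two]
    ring
  · refine ⟨(p : ℚ_[p]) ^ k, zpow_ne_zero k hp, u, .inr ?_⟩
    rw [hxu, hk, zpow_add_one₀ hp, mul_comm 2 k, zpow_mul, zpow_two]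
    ring

theorem exists_unit_isSquare_or_isSquare_mul (hp : p ≠ 2) :
    ∃ ε : ℤ_[p]ˣ, ∀ u : ℤ_[p]ˣ, IsSquare (u : ℚ_[p]) ∨ IsSquare ((u : ℚ_[p]) * ε) := by
  obtain ⟨e, he⟩ := FiniteField.exists_nonsquare (F := ZMod p) (by rwa [ZMod.ringChar_zmod_n])
  have he₀ : e ≠ 0 := by rintro rfl; exact he IsSquare.zero
  have hlift : toZMod (e.val : ℤ_[p]) = e := by simp
  have hunit : IsUnit (e.val : ℤ_[p]) := by
    rw [isUnit_iff, norm_eq_one_iff_toZMod_ne_zero, hlift]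
    exact he₀
  refine ⟨hunit.unit, fun u => ?_⟩
  have hu₀ : toZMod (u : ℤ_[p]) ≠ 0 := (u.isUnit.map toZMod).ne_zero
  by_cases hu : IsSquare (toZMod (u : ℤ_[p]))
  · exact .inl (isSquare_coe (isSquare_of_isSquare_toZMod hp hu₀ hu))
  · have hsq : IsSquare ((u : ℤ_[p]) * hunit.unit) :=
      isSquare_of_isSquare_toZMod hp (by simpa [hlift] using And.intro hu₀ he₀)
        (by simpa [hlift] using FiniteField.isSquare_mul_of_not_isSquare hu he)
    exact .inr (by exact_mod_cast isSquare_coe hsq)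

theorem isNorm_units (hp : p ≠ 2) (u v : ℤ_[p]ˣ) : IsNorm (u : ℚ_[p]) v := by
  have hcard : Fintype.card (ZMod p) % 2 = 1 := by
    rw [ZMod.card, ← Nat.odd_iff]
    exact (Fact.out : p.Prime).odd_of_ne_two hp
  obtain ⟨x, z, hxz⟩ := FiniteField.exists_sq_eq_mul_sq_add hcard
    (u.isUnit.map toZMod).ne_zero (toZMod (v : ℤ_[p]))
  by_cases hz : z = 0
  · -- then `-u v` is a unit with square residue `(u x)²`, and `v = -u · (-u v) / u²`
    subst hz
    have hsq : IsSquare (-(u * v : ℤ_[p])) := isSquare_of_isSquare_toZMod hp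
      (by simpa using And.intro (u.isUnit.map toZMod).ne_zero (v.isUnit.map toZMod).ne_zero)
      ⟨toZMod (u : ℤ_[p]) * x, by simp; linear_combination (toZMod (u : ℤ_[p])) * hxz⟩
    exact (isNorm_neg_self _).of_isSquare_mul (by simp)
      (by rw [neg_mul]; exact_mod_cast isSquare_coe hsq)
  · obtain ⟨s, hs⟩ : IsSquare ((u : ℤ_[p]) * (x.val : ℤ_[p]) ^ 2 + v) :=
      isSquare_of_isSquare_toZMod hp (by simp [← hxz, hz]) ⟨z, by simp; linear_combination -hxz⟩
    refine ⟨(x.val : ℤ_[p]), s, ?_⟩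
    have := congrArg ((↑) : ℤ_[p] → ℚ_[p]) hs
    push_cast at this ⊢
    linear_combination -this

theorem normIndexLeTwo_unit (hp : p ≠ 2) (u : ℤ_[p]ˣ) : NormIndexLeTwo (u : ℚ_[p]) := by
  refine ⟨p, by simpa using (Fact.out : p.Prime).ne_zero, fun x hx => ?_⟩
  obtain ⟨t, -, v, rfl | rfl⟩ := exists_eq_sq_mul_unit hx
  · exact .inl (((IsSquare.sq t).isNorm _).mul (isNorm_units hp u v))
  · refine .inr ?_
    convert ((IsSquare.sq (t * p)).isNorm _).mul (isNorm_units hp u v) using 1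
    ring

theorem normIndexLeTwo_p_mul_unit (hp : p ≠ 2) (u : ℤ_[p]ˣ) :
    NormIndexLeTwo ((p : ℚ_[p]) * u) := by
  obtain ⟨ε, hε⟩ := exists_unit_isSquare_or_isSquare_mul hp
  refine ⟨ε, by simp, fun x hx => ?_⟩
  obtain ⟨t, -, v, rfl | rfl⟩ := exists_eq_sq_mul_unit hx
  · refine (hε v).imp (fun h => ?_) (fun h => ?_)
    · exact ((IsSquare.sq t).mul h).isNorm _
    · rw [mul_assoc]
      exact ((IsSquare.sq t).mul h).isNorm _
  · have hnorm := isNorm_neg_self ((p : ℚ_[p]) * u)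
    have hpu : -((p : ℚ_[p]) * u) ≠ 0 := by simp [(Fact.out : p.Prime).ne_zero]
    refine (hε (-(u * v))).imp (fun h => hnorm.of_isSquare_mul hpu ?_)
      (fun h => hnorm.of_isSquare_mul hpu ?_)
    · rw [show -((p : ℚ_[p]) * u) * (t ^ 2 * (p * v)) = (t * p) ^ 2 * (-(u * v) : ℤ_[p]ˣ) by
        push_cast [Units.val_neg, Units.val_mul]; ring]
      exact (IsSquare.sq _).mul h
    · rw [show -((p : ℚ_[p]) * u) * (t ^ 2 * (p * v) * ε) =
          (t * p) ^ 2 * ((-(u * v) : ℤ_[p]ˣ) * ε) by push_cast [Units.val_neg, Units.val_mul]; ring]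
      exact (IsSquare.sq _).mul h

theorem normIndexLeTwo_of_ne_two (hp : p ≠ 2) {a : ℚ_[p]} (ha : a ≠ 0) : NormIndexLeTwo a := by
  obtain ⟨s, hs, u, rfl | rfl⟩ := exists_eq_sq_mul_unit ha <;> rw [normIndexLeTwo_sq_mul_iff hs]
  · exact normIndexLeTwo_unit hp u
  · exact normIndexLeTwo_p_mul_unit hp u

end

theorem isSquare_intCast_of_emod_eight_eq_one {n : ℤ} (h : n % 8 = 1) :
    IsSquare (n : ℚ_[2]) := by
  have hn : IsSquare (n : ℤ_[2]) := isSquare_of_toZModPow_three_eq_one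
    (by rw [map_intCast, ← ZMod.intCast_mod]; norm_num [h])
  exact_mod_cast isSquare_coe hn

noncomputable def sqClassRep (v : ZMod 2 × ZMod 2 × ZMod 2) : ℚ_[2] :=
  (-1) ^ v.1.val * 5 ^ v.2.1.val * 2 ^ v.2.2.val

theorem sqClassRep_ne_zero (v : ZMod 2 × ZMod 2 × ZMod 2) : sqClassRep v ≠ 0 := by
  simp [sqClassRep]

theorem isSquare_sqClassRep_mul_sqClassRep_mul_add (v w : ZMod 2 × ZMod 2 × ZMod 2) :
    IsSquare (sqClassRep v * sqClassRep w * sqClassRep (v + w)) := by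
  obtain ⟨r, hr⟩ := ((isSquare_pow_val_mul_pow_val_mul_pow_val_add (-1 : ℚ_[2]) v.1 w.1).mul
    (isSquare_pow_val_mul_pow_val_mul_pow_val_add (5 : ℚ_[2]) v.2.1 w.2.1)).mul
    (isSquare_pow_val_mul_pow_val_mul_pow_val_add (2 : ℚ_[2]) v.2.2 w.2.2)
  exact ⟨r, by rw [← hr]; simp only [sqClassRep, Prod.fst_add, Prod.snd_add]; ring⟩

theorem exists_isSquare_unit_mul (u : ℤ_[2]ˣ) :
    ∃ i j : ZMod 2, IsSquare ((u : ℚ_[2]) * ((-1) ^ i.val * 5 ^ j.val)) := by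
  have hres : ∀ m m' : ZMod (2 ^ 3), m * m' = 1 →
      ∃ i j : ZMod 2, m * ((-1) ^ i.val * 5 ^ j.val) = 1 := by
    decide
  obtain ⟨i, j, h⟩ := hres (toZModPow 3 (u : ℤ_[2])) (toZModPow 3 (↑u⁻¹ : ℤ_[2]))
    (by rw [← map_mul, Units.mul_inv, map_one])
  have hsq : IsSquare ((u : ℤ_[2]) * ((-1) ^ i.val * 5 ^ j.val)) :=
    isSquare_of_toZModPow_three_eq_one
      (by rwa [map_mul, map_mul, map_pow, map_pow, map_neg, map_one, map_ofNat])
  exact ⟨i, j, by exact_mod_cast isSquare_coe hsq⟩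

theorem exists_eq_sq_mul_sqClassRep {x : ℚ_[2]} (hx : x ≠ 0) :
    ∃ t ≠ 0, ∃ v, x = t ^ 2 * sqClassRep v := by
  suffices ∃ t v, x = t ^ 2 * sqClassRep v by
    obtain ⟨t, v, rfl⟩ := this
    exact ⟨t, by rintro rfl; simp at hx, v, rfl⟩
  obtain ⟨s, -, u, hu⟩ := exists_eq_sq_mul_unit hx
  obtain ⟨i, j, σ, hσ⟩ := exists_isSquare_unit_mul u
  set r : ℚ_[2] := (-1) ^ i.val * 5 ^ j.val
  have hr : r ≠ 0 := by simp [r]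
  have hu' : (u : ℚ_[2]) = (σ / r) ^ 2 * r := by
    field_simp
    linear_combination hσ
  rcases hu with rfl | rfl
  · exact ⟨s * (σ / r), (i, j, 0), by rw [hu']; simp [sqClassRep, r]; ring⟩
  · exact ⟨s * (σ / r), (i, j, 1), by rw [hu']; simp [sqClassRep, r, ZMod.val_one]; ring⟩

/-- `(-1) ^ hilbertPairingTwo w v` is the Hilbert symbol `(sqClassRep w, sqClassRep v)₂`, by the
formula `(2^α u, 2^β v)₂ = (-1)^(ε(u) ε(v) + α ω(v) + β ω(u))` (Serre, *A Course in Arithmetic*,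
III.1.2). -/
def hilbertPairingTwo (w v : ZMod 2 × ZMod 2 × ZMod 2) : ZMod 2 :=
  w.1 * v.1 + w.2.1 * v.2.2 + w.2.2 * v.2.1

theorem isNorm_sqClassRep_add {a : ℚ_[2]} {v w : ZMod 2 × ZMod 2 × ZMod 2}
    (hv : IsNorm a (sqClassRep v)) (hw : IsNorm a (sqClassRep w)) :
    IsNorm a (sqClassRep (v + w)) :=
  (hv.mul hw).of_isSquare_mul (mul_ne_zero (sqClassRep_ne_zero v) (sqClassRep_ne_zero w))
    (isSquare_sqClassRep_mul_sqClassRep_mul_add v w)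

theorem isNorm_sqClassRep_of_ker_eq_span {w g₁ g₂ : ZMod 2 × ZMod 2 × ZMod 2}
    (h₁ : IsNorm (sqClassRep w) (sqClassRep g₁)) (h₂ : IsNorm (sqClassRep w) (sqClassRep g₂))
    (hker : ∀ v, hilbertPairingTwo w v = 0 → v = 0 ∨ v = g₁ ∨ v = g₂ ∨ v = g₁ + g₂)
    {v : ZMod 2 × ZMod 2 × ZMod 2} (hv : hilbertPairingTwo w v = 0) :
    IsNorm (sqClassRep w) (sqClassRep v) := by
  rcases hker v hv with rfl | rfl | rfl | rfl
  · exact IsSquare.isNorm ⟨1, by simp [sqClassRep]⟩ _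
  · exact h₁
  · exact h₂
  · exact isNorm_sqClassRep_add h₁ h₂

theorem isNorm_sqClassRep_of_hilbertPairingTwo_eq_zero {w v : ZMod 2 × ZMod 2 × ZMod 2}
    (hv : hilbertPairingTwo w v = 0) : IsNorm (sqClassRep w) (sqClassRep v) := by
  obtain ⟨s₇, hs₇⟩ := isSquare_intCast_of_emod_eight_eq_one (n := -7) (by norm_num)
  obtain ⟨s₁₅, hs₁₅⟩ := isSquare_intCast_of_emod_eight_eq_one (n := -15) (by norm_num)
  push_cast at hs₇ hs₁₅
  have hw : ∀ w : ZMod 2 × ZMod 2 × ZMod 2, w = 0 ∨ w = (1, 0, 0) ∨ w = (0, 1, 0) ∨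
      w = (0, 0, 1) ∨ w = (1, 1, 0) ∨ w = (1, 0, 1) ∨ w = (0, 1, 1) ∨ w = (1, 1, 1) := by
    decide
  rcases hw w with rfl | rfl | rfl | rfl | rfl | rfl | rfl | rfl
  · exact isNorm_of_isSquare (sqClassRep_ne_zero 0) ⟨1, by simp [sqClassRep]⟩ _
  · exact isNorm_sqClassRep_of_ker_eq_span (g₁ := (0, 1, 0)) (g₂ := (0, 0, 1))
      ⟨1, 2, by norm_num [sqClassRep, ZMod.val_one]⟩
      ⟨1, 1, by norm_num [sqClassRep, ZMod.val_one]⟩ (by decide) hv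
  · exact isNorm_sqClassRep_of_ker_eq_span (g₁ := (1, 0, 0)) (g₂ := (1, 1, 0))
      ⟨1, 2, by norm_num [sqClassRep, ZMod.val_one]⟩
      ⟨1, 0, by norm_num [sqClassRep, ZMod.val_one]⟩ (by decide) hv
  · exact isNorm_sqClassRep_of_ker_eq_span (g₁ := (1, 0, 0)) (g₂ := (1, 0, 1))
      ⟨1, 1, by norm_num [sqClassRep, ZMod.val_one]⟩
      ⟨1, 0, by norm_num [sqClassRep, ZMod.val_one]⟩ (by decide) hv
  · exact isNorm_sqClassRep_of_ker_eq_span (g₁ := (0, 1, 0)) (g₂ := (1, 0, 1))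
      ⟨1, 0, by norm_num [sqClassRep, ZMod.val_one]⟩
      ⟨1, s₇, by norm_num [sqClassRep, ZMod.val_one]; linear_combination -hs₇⟩ (by decide) hv
  · exact isNorm_sqClassRep_of_ker_eq_span (g₁ := (0, 0, 1)) (g₂ := (1, 1, 0))
      ⟨1, 0, by norm_num [sqClassRep, ZMod.val_one]⟩
      ⟨1, s₇, by norm_num [sqClassRep, ZMod.val_one]; linear_combination -hs₇⟩ (by decide) hv
  · exact isNorm_sqClassRep_of_ker_eq_span (g₁ := (1, 1, 1)) (g₂ := (1, 0, 0))
      ⟨1, 0, by norm_num [sqClassRep, ZMod.val_one]⟩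
      ⟨1, 3, by norm_num [sqClassRep, ZMod.val_one]⟩ (by decide) hv
  · exact isNorm_sqClassRep_of_ker_eq_span (g₁ := (0, 1, 1)) (g₂ := (1, 1, 0))
      ⟨1, 0, by norm_num [sqClassRep, ZMod.val_one]⟩
      ⟨1, s₁₅, by norm_num [sqClassRep, ZMod.val_one]; linear_combination -hs₁₅⟩ (by decide) hv

theorem normIndexLeTwo_two {a : ℚ_[2]} (ha : a ≠ 0) : NormIndexLeTwo a := by
  obtain ⟨s, hs, w, rfl⟩ := exists_eq_sq_mul_sqClassRep ha
  rw [normIndexLeTwo_sq_mul_iff hs]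
  have hcoset : ∀ w, ∃ δ, ∀ v, hilbertPairingTwo w v = 0 ∨ hilbertPairingTwo w (v + δ) = 0 := by
    decide
  obtain ⟨δ, hδ⟩ := hcoset w
  refine ⟨sqClassRep δ, sqClassRep_ne_zero δ, fun x hx => ?_⟩
  obtain ⟨t, -, v, rfl⟩ := exists_eq_sq_mul_sqClassRep hx
  refine (hδ v).imp (fun h => ?_) (fun h => ?_)
  · exact ((IsSquare.sq t).isNorm _).mul (isNorm_sqClassRep_of_hilbertPairingTwo_eq_zero h)
  · refine (isNorm_sqClassRep_of_hilbertPairingTwo_eq_zero h).of_isSquare_mul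
      (sqClassRep_ne_zero _) ?_
    obtain ⟨r, hr⟩ := isSquare_sqClassRep_mul_sqClassRep_mul_add v δ
    exact ⟨t * r, by linear_combination t ^ 2 * hr⟩

theorem normIndexLeTwo {p : ℕ} [Fact p.Prime] {a : ℚ_[p]} (ha : a ≠ 0) : NormIndexLeTwo a := by
  obtain rfl | hp := eq_or_ne p 2
  · exact normIndexLeTwo_two ha
  · exact normIndexLeTwo_of_ne_two hp ha

end Padic

/-- Multiplicativity of the Hilbert symbol: `(a,b)_q (a,c)_q = (a,bc)_q`. -/
theorem hilbert_symbol_multiplicative {q : ℕ} [Fact q.Prime] (a b c : ℚ_[q])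
    (ha : a ≠ 0) (hb : b ≠ 0) (hc : c ≠ 0) :
    QSolvable a (b * c) ↔ (QSolvable a b ↔ QSolvable a c) := by
  simp only [qsolvable_iff_isNorm ha]
  exact isNorm_mul_iff_of_normIndexLeTwo (Padic.normIndexLeTwo ha) hb hc
end

section
/- Let f and g be nondegenerate quadratic forms on finite-dimensional ℚ-vector spaces. Then f and g are projectively equivalent if and only if the orthogonal direct sums f ⊕ ⟨1,−1⟩ and g ⊕ ⟨1,−1⟩ are projectively equivalent, where ⟨1,−1⟩ denotes the quadratic form (s, t) ↦ s² − t² on ℚ². -/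
/-!
Scaling the hyperbolic plane `H = ⟨1, -1⟩` by any `m ≠ 0` gives an equivalent form (a squeeze in
the light-cone coordinates `s ± t`), so `m • (f ⊕ H) ≅ m • f ⊕ H` and the forward direction is
immediate. Conversely `m • f ⊕ H ≅ g ⊕ H`, and `H = ⟨1⟩ ⊕ ⟨-1⟩` is cancelled one line at a time
by Witt cancellation: reflections in anisotropic vectors act transitively on vectors of a given
nonzero length, so an isometry `g ⊕ ⟨a⟩ ≅ f ⊕ ⟨a⟩` can be corrected to fix the distinguished line,
and it then maps the orthogonal complement `g` onto `f`.
-/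

/-- Two quadratic forms over a commutative ring are equivalent if there is an invertible
linear map `C` between their underlying spaces with `f (C v) = g v` for all `v`. -/
def QFEquiv {R V W : Type*} [CommRing R] [AddCommGroup V] [Module R V]
    [AddCommGroup W] [Module R W] (f : QuadraticForm R V) (g : QuadraticForm R W) : Prop :=
  ∃ C : W ≃ₗ[R] V, ∀ v : W, f (C v) = g v

/-- Two rational quadratic forms are projectively equivalent if some positive rational
multiple of the first is equivalent to the second. -/
def ProjEquiv {V W : Type*} [AddCommGroup V] [Module ℚ V] [AddCommGroup W] [Module ℚ W]
    (f : QuadraticForm ℚ V) (g : QuadraticForm ℚ W) : Prop :=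
  ∃ m : ℚ, 0 < m ∧ QFEquiv (m • f) g

/-- The quadratic form `⟨1, -1⟩ : (s, t) ↦ s² − t²` on `ℚ²`. -/
noncomputable def hypForm : QuadraticForm ℚ (ℚ × ℚ) :=
  QuadraticMap.prod QuadraticMap.sq (-QuadraticMap.sq)

theorem qfEquiv_iff_equivalent {R V W : Type*} [CommRing R] [AddCommGroup V] [Module R V]
    [AddCommGroup W] [Module R W] {f : QuadraticForm R V} {g : QuadraticForm R W} :
    QFEquiv f g ↔ g.Equivalent f :=
  ⟨fun ⟨C, hC⟩ => ⟨⟨C, hC⟩⟩, fun ⟨e⟩ => ⟨e.toLinearEquiv, e.map_app⟩⟩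

namespace QuadraticMap

section Prod

variable {R M₁ M₂ M₃ P : Type*} [CommSemiring R] [AddCommMonoid M₁] [AddCommMonoid M₂]
  [AddCommMonoid M₃] [AddCommMonoid P] [Module R M₁] [Module R M₂] [Module R M₃] [Module R P]

theorem smul_prod (a : R) (Q₁ : QuadraticMap R M₁ P) (Q₂ : QuadraticMap R M₂ P) :
    a • Q₁.prod Q₂ = (a • Q₁).prod (a • Q₂) := by
  ext
  simp [smul_add]

def IsometryEquiv.prodAssoc (Q₁ : QuadraticMap R M₁ P) (Q₂ : QuadraticMap R M₂ P)
    (Q₃ : QuadraticMap R M₃ P) : ((Q₁.prod Q₂).prod Q₃).IsometryEquiv (Q₁.prod (Q₂.prod Q₃)) where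
  toLinearEquiv := LinearEquiv.prodAssoc R M₁ M₂ M₃
  map_app' _ := by simp [add_assoc]

end Prod

section Polar

variable {R M M₁ M₂ N : Type*} [CommRing R] [AddCommGroup M] [AddCommGroup M₁]
  [AddCommGroup M₂] [AddCommGroup N] [Module R M] [Module R M₁] [Module R M₂] [Module R N]

theorem map_add_eq_add_polar (Q : QuadraticMap R M N) (x y : M) :
    Q (x + y) = Q x + Q y + polar Q x y := by
  rw [polar]
  abel

theorem map_sub_smul (Q : QuadraticForm R M) (x u : M) (c : R) :
    Q (x - c • u) = Q x - c * polar Q u x + c ^ 2 * Q u := by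
  rw [sub_eq_add_neg, ← neg_smul, map_add_eq_add_polar, QuadraticMap.map_smul, polar_comm,
    polar_smul_left]
  simp only [smul_eq_mul]
  ring

theorem Isometry.polar_map_map {Q₁ : QuadraticMap R M₁ N} {Q₂ : QuadraticMap R M₂ N}
    (f : Q₁ →qᵢ Q₂) (x y : M₁) : polar Q₂ (f x) (f y) = polar Q₁ x y := by
  simp only [polar, ← map_add, f.map_app]

end Polar

section Reflection

variable {K V : Type*} [Field K] [AddCommGroup V] [Module K V]

noncomputable def reflection (Q : QuadraticForm K V) {u : V} (hu : Q u ≠ 0) :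
    Q.IsometryEquiv Q where
  toLinearEquiv := Module.reflection (f := (Q u)⁻¹ • polarBilin Q u) (x := u) (by
    simp only [LinearMap.smul_apply, polarBilin_apply_apply, polar_self, smul_eq_mul,
      nsmul_eq_mul, Nat.cast_ofNat]
    field_simp)
  map_app' x := by
    simp only [LinearEquiv.toFun_eq_coe, Module.reflection_apply, LinearMap.smul_apply,
      polarBilin_apply_apply, smul_eq_mul, map_sub_smul]
    field_simp
    ring

theorem reflection_apply (Q : QuadraticForm K V) {u : V} (hu : Q u ≠ 0) (x : V) :
    Q.reflection hu x = x - ((Q u)⁻¹ * polar Q u x) • u :=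
  rfl

theorem reflection_apply_self (Q : QuadraticForm K V) {u : V} (hu : Q u ≠ 0) :
    Q.reflection hu u = -u := by
  rw [reflection_apply, polar_self, nsmul_eq_mul, Nat.cast_ofNat, mul_left_comm,
    inv_mul_cancel₀ hu, mul_one, two_smul, sub_add_cancel_left]

theorem reflection_apply_of_polar_eq (Q : QuadraticForm K V) {u x : V} (hu : Q u ≠ 0)
    (hx : polar Q u x = Q u) : Q.reflection hu x = x - u := by
  rw [reflection_apply, hx, inv_mul_cancel₀ hu, one_smul]

/-- Since `Q (v - w) + Q (v + w) = 4 Q v ≠ 0`, either the reflection in `v - w` maps `v` to `w`,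
or the reflection in `v + w` maps `v` to `-w`, which the reflection in `w` maps back to `w`. -/
theorem exists_isometryEquiv_apply_eq [NeZero (2 : K)] (Q : QuadraticForm K V) {v w : V}
    (hvw : Q v = Q w) (hv : Q v ≠ 0) : ∃ e : Q.IsometryEquiv Q, e v = w := by
  have hsub : Q (v - w) = 2 * Q v - polar Q v w := by
    rw [sub_eq_add_neg, map_add_eq_add_polar, QuadraticMap.map_neg, polar_neg_right, hvw]
    ring
  have hadd : Q (v + w) = 2 * Q v + polar Q v w := by
    rw [map_add_eq_add_polar, hvw]
    ring
  by_cases h : Q (v - w) = 0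
  · have h' : Q (v + w) ≠ 0 := by
      intro h'
      have : (2 : K) * (2 * Q v) = 0 := by
        linear_combination hsub.symm.trans h + hadd.symm.trans h'
      exact hv (by simpa [two_ne_zero] using this)
    have hw : Q w ≠ 0 := hvw ▸ hv
    have hpolar : polar Q (v + w) v = Q (v + w) := by
      rw [polar_add_left, polar_self, polar_comm, hadd, nsmul_eq_mul, Nat.cast_ofNat]
    refine ⟨(Q.reflection h').trans (Q.reflection hw), ?_⟩
    change Q.reflection hw (Q.reflection h' v) = w
    rw [reflection_apply_of_polar_eq _ h' hpolar, sub_add_cancel_left, map_neg,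
      reflection_apply_self, neg_neg]
  · have hpolar : polar Q (v - w) v = Q (v - w) := by
      rw [polar_sub_left, polar_self, polar_comm, hsub, nsmul_eq_mul, Nat.cast_ofNat]
    exact ⟨Q.reflection h, by rw [reflection_apply_of_polar_eq _ h hpolar, sub_sub_cancel]⟩

end Reflection

section Cancellation

variable {K V W : Type*} [Field K] [NeZero (2 : K)] [AddCommGroup V] [Module K V]
  [AddCommGroup W] [Module K W] {F₁ : QuadraticForm K V} {F₂ : QuadraticForm K W}
  {A : QuadraticForm K K}

theorem Isometry.apply_prod_eq_of_apply_inr (hA : A 1 ≠ 0) (e : F₂.prod A →qᵢ F₁.prod A)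
    (he : e (0, 1) = (0, 1)) (x : W) (t : K) : e (x, t) = ((e (x, 0)).1, t) := by
  -- `e (x, 0)` is orthogonal to `e (0, 1) = (0, 1)`, and `polar A s 1 = 2 s A 1`.
  have hsnd : (e (x, 0)).2 = 0 := by
    have h := e.polar_map_map (x, 0) (0, 1)
    simp only [he, polar_prod, polar_zero_left, polar_zero_right, zero_add] at h
    rw [← mul_one (e (x, 0)).2, ← smul_eq_mul, polar_smul_left, polar_self] at h
    simpa [hA, two_ne_zero] using h
  have hsplit : ((x, t) : W × K) = (x, 0) + t • (0, 1) := by simp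
  rw [hsplit, map_add, map_smul, he]
  ext <;> simp [hsnd]

theorem Equivalent.of_isometryEquiv_prod_apply_inr (hA : A 1 ≠ 0)
    (e : (F₂.prod A).IsometryEquiv (F₁.prod A)) (he : e (0, 1) = (0, 1)) :
    F₂.Equivalent F₁ := by
  let φ : W →ₗ[K] V := LinearMap.fst K V K ∘ₗ (e : W × K →ₗ[K] V × K) ∘ₗ LinearMap.inl K W K
  have hφ (x : W) (t : K) : e (x, t) = (φ x, t) :=
    e.toIsometry.apply_prod_eq_of_apply_inr hA he x t
  have hinj : Function.Injective φ := fun x y hxy =>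
    congrArg Prod.fst (EquivLike.injective e (show e (x, 0) = e (y, 0) by rw [hφ, hφ, hxy]))
  have hsurj : Function.Surjective φ := fun y => by
    obtain ⟨⟨x, t⟩, hxt⟩ := EquivLike.surjective e (y, 0)
    rw [hφ, Prod.mk.injEq] at hxt
    exact ⟨x, hxt.1⟩
  refine ⟨{ LinearEquiv.ofBijective φ ⟨hinj, hsurj⟩ with map_app' := fun x => ?_ }⟩
  change F₁ (φ x) = F₂ x
  simpa [hφ] using e.map_app (x, 0)

theorem Equivalent.of_prod_right (hA : A 1 ≠ 0) (h : (F₁.prod A).Equivalent (F₂.prod A)) :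
    F₁.Equivalent F₂ := by
  obtain ⟨e⟩ := h.symm
  obtain ⟨r, hr⟩ := exists_isometryEquiv_apply_eq (F₁.prod A) (v := e (0, 1)) (w := (0, 1))
    (by simp [e.map_app]) (by simpa [e.map_app])
  exact (of_isometryEquiv_prod_apply_inr hA (e.trans r) hr).symm

end Cancellation

end QuadraticMap

@[simp]
theorem hypForm_apply (s t : ℚ) : hypForm (s, t) = s * s - t * t := by
  simp [hypForm, sub_eq_add_neg]

theorem QuadraticMap.Equivalent.of_prod_hypForm {V W : Type*} [AddCommGroup V] [Module ℚ V]
    [AddCommGroup W] [Module ℚ W] {F₁ : QuadraticForm ℚ V} {F₂ : QuadraticForm ℚ W}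
    (h : (F₁.prod hypForm).Equivalent (F₂.prod hypForm)) : F₁.Equivalent F₂ := by
  have h' : ((F₁.prod QuadraticMap.sq).prod (-QuadraticMap.sq)).Equivalent
      ((F₂.prod QuadraticMap.sq).prod (-QuadraticMap.sq)) :=
    (Equivalent.trans ⟨IsometryEquiv.prodAssoc _ _ _⟩ h).trans
      ⟨(IsometryEquiv.prodAssoc _ _ _).symm⟩
  exact (h'.of_prod_right (by simp)).of_prod_right (by simp)

/-- In the light-cone coordinates `(s + t, s - t)` this is `(a, b) ↦ (m a, b)`. -/
def hypScale (m : ℚ) : (ℚ × ℚ) →ₗ[ℚ] ℚ × ℚ :=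
  ((m + 1) / 2) • LinearMap.id + ((m - 1) / 2) • (LinearEquiv.prodComm ℚ ℚ ℚ).toLinearMap

theorem hypScale_apply (m s t : ℚ) :
    hypScale m (s, t) =
      ((m + 1) / 2 * s + (m - 1) / 2 * t, (m + 1) / 2 * t + (m - 1) / 2 * s) := by
  simp [hypScale]

theorem hypScale_comp_hypScale (m n : ℚ) : hypScale m ∘ₗ hypScale n = hypScale (m * n) := by
  ext <;> simp [hypScale_apply] <;> ring

theorem hypScale_one : hypScale 1 = LinearMap.id := by
  ext <;> simp [hypScale_apply]

theorem hypForm_hypScale (m : ℚ) (p : ℚ × ℚ) : hypForm (hypScale m p) = m * hypForm p := by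
  obtain ⟨s, t⟩ := p
  simp only [hypScale_apply, hypForm_apply]
  ring

theorem smul_hypForm_equivalent {m : ℚ} (hm : m ≠ 0) : (m • hypForm).Equivalent hypForm :=
  ⟨{ toLinearEquiv := LinearEquiv.ofLinearMap (hypScale m) (hypScale m⁻¹)
        (by rw [hypScale_comp_hypScale, mul_inv_cancel₀ hm, hypScale_one])
        (by rw [hypScale_comp_hypScale, inv_mul_cancel₀ hm, hypScale_one])
     map_app' p := by simp [hypForm_hypScale] }⟩

theorem projEquiv_iff_projEquiv_add_hyperbolic_general
    {V W : Type*} [AddCommGroup V] [Module ℚ V]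
    [AddCommGroup W] [Module ℚ W]
    (f : QuadraticForm ℚ V) (g : QuadraticForm ℚ W) :
    ProjEquiv f g ↔ ProjEquiv (f.prod hypForm) (g.prod hypForm) := by
  simp only [ProjEquiv, qfEquiv_iff_equivalent, QuadraticMap.smul_prod]
  refine exists_congr fun m => and_congr_right fun hm => ⟨fun h => ?_, fun h => ?_⟩
  · exact h.prod (smul_hypForm_equivalent hm.ne').symm
  · exact (h.trans ((QuadraticMap.Equivalent.refl _).prod
      (smul_hypForm_equivalent hm.ne'))).of_prod_hypForm

/-- Two nondegenerate rational quadratic forms are projectively equivalent iff their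
orthogonal direct sums with `⟨1, −1⟩` are projectively equivalent. -/
theorem projEquiv_iff_projEquiv_add_hyperbolic
    {V W : Type*} [AddCommGroup V] [Module ℚ V] [FiniteDimensional ℚ V]
    [AddCommGroup W] [Module ℚ W] [FiniteDimensional ℚ W]
    (f : QuadraticForm ℚ V) (g : QuadraticForm ℚ W)
    (hf : ∀ v, (∀ w, QuadraticMap.polar f v w = 0) → v = 0)
    (hg : ∀ v, (∀ w, QuadraticMap.polar g v w = 0) → v = 0) :
    ProjEquiv f g ↔ ProjEquiv (f.prod hypForm) (g.prod hypForm) :=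
  projEquiv_iff_projEquiv_add_hyperbolic_general f g
end

section
/- Let J₁, J₂ : ℚ⁴ → ℚ⁴ be the linear maps given by the matrices J₁ = [[0,−1,0,0],[1,0,0,0],[0,0,0,−1],[0,0,1,0]] and J₂ = [[0,0,1,0],[0,0,0,−1],[−1,0,0,0],[0,1,0,0]]. If f is a quadratic form on ℚ⁴ with f(J₁·v) = f(v) and f(J₂·v) = f(v) for all v ∈ ℚ⁴, then there exists a ∈ ℚ such that f(x₁,x₂,x₃,x₄) = a·(x₁² + x₂² + x₃² + x₄²). -/
/-!
Over a field of characteristic not two a symmetric matrix is determined by its quadratic form,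
so invariance of `v ↦ vᵀ M v` under an orthogonal `J` means `Jᵀ M J = M`, i.e. `M` commutes
with `J`. Identifying `ℚ⁴` with the rational quaternions, `J₁` and `J₂` are left multiplication
by `i` and `-j`; their commutant consists of the right multiplications by quaternions
`a + b i + c j + d k`, whose matrices are `a • 1` plus a skew-symmetric matrix. A symmetric `M`
in it is therefore scalar.
-/

open Matrix

/-- The matrix `J₁ = [[0,−1,0,0],[1,0,0,0],[0,0,0,−1],[0,0,1,0]]`. -/
def J₁ : Matrix (Fin 4) (Fin 4) ℚ :=
  !![0, -1, 0, 0; 1, 0, 0, 0; 0, 0, 0, -1; 0, 0, 1, 0]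

/-- The matrix `J₂ = [[0,0,1,0],[0,0,0,−1],[−1,0,0,0],[0,1,0,0]]`. -/
def J₂ : Matrix (Fin 4) (Fin 4) ℚ :=
  !![0, 0, 1, 0; 0, 0, 0, -1; -1, 0, 0, 0; 0, 1, 0, 0]

namespace Matrix

variable {n K : Type*} [Fintype n]

theorem mulVec_dotProduct_mulVec_mulVec [CommSemiring K] (A J : Matrix n n K) (v : n → K) :
    J *ᵥ v ⬝ᵥ A *ᵥ (J *ᵥ v) = v ⬝ᵥ (Jᵀ * A * J) *ᵥ v := by
  rw [mulVec_mulVec, ← vecMul_transpose, ← dotProduct_mulVec, mulVec_mulVec, Matrix.mul_assoc]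

variable [DecidableEq n] [Field K] [NeZero (2 : K)]

theorem IsSymm.ext_of_dotProduct_mulVec_self {A B : Matrix n n K} (hA : A.IsSymm)
    (hB : B.IsSymm) (h : ∀ v, v ⬝ᵥ A *ᵥ v = v ⬝ᵥ B *ᵥ v) : A = B :=
  toBilin'.injective <|
    LinearMap.BilinForm.ext_of_isSymm (isSymm_toBilin'_iff_isSymm.mpr hA)
      (isSymm_toBilin'_iff_isSymm.mpr hB) (by simpa [toBilin'_apply'] using h)

theorem IsSymm.commute_of_dotProduct_mulVec_invariant {A J : Matrix n n K} (hA : A.IsSymm)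
    (hJ : J * Jᵀ = 1) (h : ∀ v, J *ᵥ v ⬝ᵥ A *ᵥ (J *ᵥ v) = v ⬝ᵥ A *ᵥ v) : Commute A J := by
  have hconj : Jᵀ * A * J = A := by
    refine IsSymm.ext_of_dotProduct_mulVec_self ?_ hA fun v => ?_
    · simp [IsSymm, transpose_mul, hA.eq, Matrix.mul_assoc]
    · rw [← mulVec_dotProduct_mulVec_mulVec, h]
  calc A * J = J * (Jᵀ * A * J) := by
        rw [← Matrix.mul_assoc, ← Matrix.mul_assoc, hJ, Matrix.one_mul]
    _ = J * A := by rw [hconj]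

end Matrix

theorem J₁_mul_transpose_self : J₁ * J₁ᵀ = 1 := by
  ext i j; fin_cases i <;> fin_cases j <;> simp [J₁, mul_apply, Fin.sum_univ_four]

theorem J₂_mul_transpose_self : J₂ * J₂ᵀ = 1 := by
  ext i j; fin_cases i <;> fin_cases j <;> simp [J₂, mul_apply, Fin.sum_univ_four]

theorem eq_smul_one_of_commute_J₁_J₂ {M : Matrix (Fin 4) (Fin 4) ℚ} (hM : M.IsSymm)
    (h₁ : Commute M J₁) (h₂ : Commute M J₂) : M = M 0 0 • 1 := by
  have e₁ := h₁.eq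
  have e₂ := h₂.eq
  have s := hM.eq
  simp only [← Matrix.ext_iff, Fin.forall_fin_succ] at e₁ e₂ s
  simp only [J₁, J₂, Fin.isValue, mul_apply, of_apply, cons_val', cons_val_zero, cons_val_fin_one,
    Fin.sum_univ_four, mul_zero, cons_val_one, mul_one, zero_add, cons_val, add_zero, zero_mul,
    neg_mul, one_mul, Fin.succ_zero_eq_one, mul_neg, neg_inj, Fin.succ_one_eq_two, Fin.reduceSucc,
    cons_val_succ, IsEmpty.forall_iff, and_true, transpose_apply, true_and, and_self] at e₁ e₂ s
  ext i j
  fin_cases i <;> fin_cases j <;> simp <;> linarith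

/-- If a quadratic form `f(v) = vᵀ M v` on `ℚ⁴` (with `M` symmetric) is invariant under
`J₁` and `J₂`, then `f = a·(x₁² + x₂² + x₃² + x₄²)` for some `a ∈ ℚ`. -/
theorem quaternionic_invariant_form_is_diagonal
    (M : Matrix (Fin 4) (Fin 4) ℚ) (hM : M.IsSymm)
    (f : (Fin 4 → ℚ) → ℚ) (hf : ∀ v, f v = v ⬝ᵥ M.mulVec v)
    (h1 : ∀ v, f (J₁.mulVec v) = f v) (h2 : ∀ v, f (J₂.mulVec v) = f v) :
    ∃ a : ℚ, ∀ v : Fin 4 → ℚ,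
      f v = a * (v 0 ^ 2 + v 1 ^ 2 + v 2 ^ 2 + v 3 ^ 2) := by
  have hJ₁ : Commute M J₁ :=
    hM.commute_of_dotProduct_mulVec_invariant J₁_mul_transpose_self fun v => by
      rw [← hf, ← hf, h1]
  have hJ₂ : Commute M J₂ :=
    hM.commute_of_dotProduct_mulVec_invariant J₂_mul_transpose_self fun v => by
      rw [← hf, ← hf, h2]
  obtain ⟨a, ha⟩ : ∃ a : ℚ, M = a • 1 := ⟨_, eq_smul_one_of_commute_J₁_J₂ hM hJ₁ hJ₂⟩
  refine ⟨a, fun v => ?_⟩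
  rw [hf, ha, smul_mulVec, one_mulVec, dotProduct_smul, smul_eq_mul, dotProduct,
    Fin.sum_univ_four]
  ring
end

section
/- Let n be an even positive integer and let p and q be distinct primes. Then the quadratic forms on ℚ^{n+2} given by f(x₁,…,x_{n+2}) = p·x₁² + x₂² + ⋯ + x_{n+1}² − x_{n+2}² and g(x₁,…,x_{n+2}) = q·x₁² + x₂² + ⋯ + x_{n+1}² − x_{n+2}² are not projectively equivalent over ℚ: there is no positive rational number m such that m·f is equivalent to g. -/
/-- The quadratic form `p·x₁² + x₂² + ⋯ + x_{n+1}² − x_{n+2}²` on `ℚ^{n+2}`. -/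
noncomputable def lorentzForm (n : ℕ) (p : ℕ) : QuadraticForm ℚ (Fin (n + 2) → ℚ) :=
  QuadraticMap.weightedSumSquares ℚ
    (fun i : Fin (n + 2) => if (i : ℕ) = 0 then (p : ℚ) else if (i : ℕ) = n + 1 then -1 else 1)

/-!
The determinant of the Gram matrix is an invariant of a quadratic form up to nonzero squares, and
scaling a form in even dimension `N` by `m` multiplies it by the square `m ^ N`. The two forms have
discriminants `-p` and `-q`, and `q / p` is not the square of a rational number since its
`p`-adic valuation is `-1`.
-/

open QuadraticMap Matrix

namespace QuadraticForm

variable {R ι : Type*} [CommRing R] [Invertible (2 : R)] [Fintype ι] [DecidableEq ι]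

theorem toMatrix'_weightedSumSquares (w : ι → R) :
    toMatrix' (weightedSumSquares R w) = diagonal w := by
  ext i j
  rw [toMatrix', LinearMap.toMatrix₂'_apply, associated_apply]
  simp only [Module.End.smul_def, half_moduleEnd_apply_eq_half_smul, weightedSumSquares_apply,
    Pi.add_apply, Pi.single_apply, smul_eq_mul, mul_ite, mul_one, mul_zero, Finset.sum_ite_eq',
    Finset.mem_univ, if_true]
  rcases eq_or_ne i j with rfl | hij
  · rw [Fintype.sum_eq_single i fun x hx => by simp [hx], diagonal_apply_eq]
    simp only [if_true]
    linear_combination w i * invOf_mul_self (2 : R)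
  · rw [Fintype.sum_eq_add i j hij fun x hx => by simp [hx.1, hx.2]]
    simp [hij, hij.symm]

theorem discr'_weightedSumSquares (w : ι → R) :
    discr' (weightedSumSquares R w) = ∏ i, w i := by
  rw [discr', toMatrix'_weightedSumSquares, det_diagonal]

end QuadraticForm

theorem QFEquiv.exists_discr'_eq_unit_sq_mul {R ι : Type*} [CommRing R] [Invertible (2 : R)]
    [Fintype ι] [DecidableEq ι] {f g : QuadraticForm R (ι → R)} (h : QFEquiv f g) :
    ∃ u : Rˣ, g.discr' = u ^ 2 * f.discr' := by
  obtain ⟨C, hC⟩ := h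
  have hg : g = f.comp C.toLinearMap := QuadraticMap.ext fun v => (hC v).symm
  refine ⟨LinearEquiv.det C, ?_⟩
  rw [hg, QuadraticForm.discr'_comp, LinearMap.det_toMatrix', LinearEquiv.coe_det, _root_.sq]

theorem ProjEquiv.exists_discr'_eq_sq_mul {ι : Type*} [Fintype ι] [DecidableEq ι]
    (hι : Even (Fintype.card ι)) {f g : QuadraticForm ℚ (ι → ℚ)} (h : ProjEquiv f g) :
    ∃ r : ℚ, r ≠ 0 ∧ g.discr' = r ^ 2 * f.discr' := by
  obtain ⟨m, hm, hmfg⟩ := h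
  obtain ⟨u, hu⟩ := hmfg.exists_discr'_eq_unit_sq_mul
  obtain ⟨k, hk⟩ := hι
  refine ⟨u * m ^ k, mul_ne_zero u.ne_zero (pow_ne_zero k hm.ne'), ?_⟩
  rw [hu, QuadraticForm.discr'_smul, hk]
  ring

theorem Nat.Prime.sq_mul_ne_of_not_dvd {p q : ℕ} (hp : p.Prime) (hpq : ¬p ∣ q) {r : ℚ}
    (hr : r ≠ 0) : r ^ 2 * p ≠ q := by
  have := Fact.mk hp
  intro h
  have hval := congrArg (padicValRat p) h
  rw [padicValRat.mul (pow_ne_zero 2 hr) (mod_cast hp.ne_zero), padicValRat.pow r,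
    padicValRat.self hp.one_lt, padicValRat.of_nat, padicValNat.eq_zero_of_not_dvd hpq] at hval
  omega

theorem lorentzForm_discr' (n p : ℕ) : (lorentzForm n p).discr' = -p := by
  rw [lorentzForm, QuadraticForm.discr'_weightedSumSquares, Fin.prod_univ_succ,
    Fin.prod_univ_castSucc]
  simp [Finset.prod_eq_one fun (i : Fin n) _ => if_neg i.isLt.ne]

theorem lorentz_forms_not_projectively_equivalent_general
    (n : ℕ) (hne : Even n) (p q : ℕ) (hp : p.Prime) (hq : q.Prime)
    (hpq : p ≠ q) :
    ¬ ProjEquiv (lorentzForm n p) (lorentzForm n q) := by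
  intro h
  have hdim : Even (Fintype.card (Fin (n + 2))) := by
    rw [Fintype.card_fin]
    exact hne.add even_two
  obtain ⟨r, hr, hdiscr⟩ := h.exists_discr'_eq_sq_mul hdim
  rw [lorentzForm_discr', lorentzForm_discr'] at hdiscr
  have hp_not_dvd : ¬p ∣ q := fun hdvd => hpq ((Nat.prime_dvd_prime_iff_eq hp hq).1 hdvd)
  exact hp.sq_mul_ne_of_not_dvd hp_not_dvd hr (by linear_combination hdiscr)

/-- For `n` even and positive and distinct primes `p`, `q`, the forms
`p·x₁² + x₂² + ⋯ + x_{n+1}² − x_{n+2}²` and `q·x₁² + x₂² + ⋯ + x_{n+1}² − x_{n+2}²`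
are not projectively equivalent over `ℚ`. -/
theorem lorentz_forms_not_projectively_equivalent
    (n : ℕ) (hn : 0 < n) (hne : Even n) (p q : ℕ) (hp : p.Prime) (hq : q.Prime)
    (hpq : p ≠ q) :
    ¬ ProjEquiv (lorentzForm n p) (lorentzForm n q) :=
  lorentz_forms_not_projectively_equivalent_general n hne p q hp hq hpq
end
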